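/- Let S be a finite nonempty metric space with distance d_S, let A be a metric space with distance d_A, let γ ∈ [0,1), R_max ≥ 0, L_r ≥ 0, L_P ≥ 0. Let r : S × A → ℝ satisfy 0 ≤ r(s,a) ≤ R_max and |r(s,a) − r(s',a')| ≤ L_r (d_S(s,s') + d_A(a,a')) for all s,s',a,a'. Let P : S × A → S → ℝ satisfy P(s₁|s,a) ≥ 0, ∑_{s₁} P(s₁|s,a) = 1, and ∑_{s₁} |P(s₁|s,a) − P(s₁|s',a')| ≤ L_P (d_S(s,s') + d_A(a,a')). Let π₁, π₂ : S → A be deterministic policies with d_A(π₁(s), π₂(s)) ≤ ε for every s, where ε ≥ 0. Let V₁, V₂ : S → ℝ satisfy V_i(s) = r(s, π_i(s)) + γ ∑_{s'} P(s'|s, π_i(s)) V_i(s') for all s. Then for every state s, V₁(s) − V₂(s) ≤ (1/(1−γ)) · (L_r + γ R_max L_P / (1−γ)) · ε. -/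

import Mathlib

/-!
Use the sup norm on `S → ℝ`. Subtracting the two Bellman equations, the gap `V₁ - V₂`
satisfies a Bellman equation with kernel `P(·|s, π₁ s)` and reward
`r(s, π₁ s) - r(s, π₂ s) + γ ∑ (P(·|s, π₁ s) - P(·|s, π₂ s)) V₂`.
The Lipschitz hypotheses bound this reward by `L_r ε + γ L_P ε ‖V₂‖`, and bounded rewards
give `‖V₂‖ ≤ R_max / (1 - γ)`. A stochastic kernel does not increase the sup norm, so
`‖V₁ - V₂‖ ≤ (reward bound) + γ ‖V₁ - V₂‖`.
-/

open Finset

section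

variable {S : Type*} [Fintype S]

def IsValueFunction (γ : ℝ) (r : S → ℝ) (P : S → S → ℝ) (V : S → ℝ) : Prop :=
  ∀ s, V s = r s + γ * ∑ s', P s s' * V s'

theorem abs_sum_mul_le_norm {p : S → ℝ} (hp0 : ∀ s, 0 ≤ p s) (hp1 : ∑ s, p s = 1)
    (f : S → ℝ) : |∑ s, p s * f s| ≤ ‖f‖ :=
  calc |∑ s, p s * f s| ≤ ∑ s, |p s * f s| := abs_sum_le_sum_abs _ _
    _ = ∑ s, p s * ‖f s‖ := by simp only [abs_mul, abs_of_nonneg (hp0 _), Real.norm_eq_abs]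
    _ ≤ ∑ s, p s * ‖f‖ := by gcongr with s; exacts [hp0 s, norm_le_pi_norm f s]
    _ = ‖f‖ := by rw [← sum_mul, hp1, one_mul]

theorem abs_sum_sub_mul_le (p q f : S → ℝ) :
    |∑ s, (p s - q s) * f s| ≤ (∑ s, |p s - q s|) * ‖f‖ :=
  calc |∑ s, (p s - q s) * f s| ≤ ∑ s, |(p s - q s) * f s| := abs_sum_le_sum_abs _ _
    _ = ∑ s, |p s - q s| * ‖f s‖ := by simp only [abs_mul, Real.norm_eq_abs]
    _ ≤ ∑ s, |p s - q s| * ‖f‖ := by gcongr with s; exact norm_le_pi_norm f s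
    _ = (∑ s, |p s - q s|) * ‖f‖ := (sum_mul ..).symm

theorem norm_le_div_one_sub_of_abs_le [Nonempty S] {γ a : ℝ} (hγ1 : γ < 1) {f : S → ℝ}
    (hf : ∀ s, |f s| ≤ a + γ * ‖f‖) : ‖f‖ ≤ a / (1 - γ) := by
  have hnorm : ‖f‖ ≤ a + γ * ‖f‖ := (pi_norm_le_iff_of_nonempty f).2 hf
  rw [le_div_iff₀ (sub_pos.2 hγ1)]
  linarith

theorem IsValueFunction.norm_le [Nonempty S] {γ R : ℝ} (hγ0 : 0 ≤ γ) (hγ1 : γ < 1)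
    {r : S → ℝ} {P : S → S → ℝ} {V : S → ℝ}
    (hr : ∀ s, |r s| ≤ R) (hP0 : ∀ s s', 0 ≤ P s s') (hP1 : ∀ s, ∑ s', P s s' = 1)
    (hV : IsValueFunction γ r P V) : ‖V‖ ≤ R / (1 - γ) := by
  refine norm_le_div_one_sub_of_abs_le hγ1 fun s => ?_
  calc |V s| ≤ |r s| + γ * |∑ s', P s s' * V s'| := by
        rw [hV s]
        exact (abs_add_le _ _).trans_eq (by rw [abs_mul, abs_of_nonneg hγ0])
    _ ≤ R + γ * ‖V‖ := by gcongr; exacts [hr s, abs_sum_mul_le_norm (hP0 s) (hP1 s) V]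

/-- The simulation lemma. -/
theorem IsValueFunction.norm_sub_le [Nonempty S] {γ δr δP C : ℝ}
    (hγ0 : 0 ≤ γ) (hγ1 : γ < 1) {r₁ r₂ : S → ℝ} {P₁ P₂ : S → S → ℝ} {V₁ V₂ : S → ℝ}
    (hP0 : ∀ s s', 0 ≤ P₁ s s') (hP1 : ∀ s, ∑ s', P₁ s s' = 1)
    (hr : ∀ s, |r₁ s - r₂ s| ≤ δr) (hP : ∀ s, ∑ s', |P₁ s s' - P₂ s s'| ≤ δP)
    (hV₁ : IsValueFunction γ r₁ P₁ V₁) (hV₂ : IsValueFunction γ r₂ P₂ V₂)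
    (hC : ‖V₂‖ ≤ C) :
    ‖V₁ - V₂‖ ≤ (δr + γ * (δP * C)) / (1 - γ) := by
  refine norm_le_div_one_sub_of_abs_le hγ1 fun s => ?_
  have hsplit : (V₁ - V₂) s = (r₁ s - r₂ s) + γ * ∑ s', P₁ s s' * (V₁ - V₂) s'
      + γ * ∑ s', (P₁ s s' - P₂ s s') * V₂ s' := by
    simp only [Pi.sub_apply, hV₁ s, hV₂ s, mul_sub, sub_mul, sum_sub_distrib]
    ring
  have hkernel : |∑ s', (P₁ s s' - P₂ s s') * V₂ s'| ≤ δP * C :=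
    (abs_sum_sub_mul_le _ _ V₂).trans
      (mul_le_mul (hP s) hC (norm_nonneg _) ((sum_nonneg fun _ _ => abs_nonneg _).trans (hP s)))
  rw [hsplit]
  calc _ ≤ |r₁ s - r₂ s| + γ * |∑ s', P₁ s s' * (V₁ - V₂) s'|
        + γ * |∑ s', (P₁ s s' - P₂ s s') * V₂ s'| :=
        (abs_add_three _ _ _).trans_eq (by rw [abs_mul, abs_mul, abs_of_nonneg hγ0])
    _ ≤ δr + γ * ‖V₁ - V₂‖ + γ * (δP * C) := add_le_add_three (hr s)
        (mul_le_mul_of_nonneg_left (abs_sum_mul_le_norm (hP0 s) (hP1 s) _) hγ0)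
        (mul_le_mul_of_nonneg_left hkernel hγ0)
    _ = δr + γ * (δP * C) + γ * ‖V₁ - V₂‖ := by ring

end

theorem le_mul_of_le_mul_dist_self_add_dist {X Y : Type*} [PseudoMetricSpace X]
    [PseudoMetricSpace Y] {L ε c : ℝ} (hL : 0 ≤ L) {x : X} {y y' : Y} (hy : dist y y' ≤ ε)
    (hc : c ≤ L * (dist x x + dist y y')) : c ≤ L * ε := by
  rw [dist_self, zero_add] at hc
  exact hc.trans (mul_le_mul_of_nonneg_left hy hL)

theorem deterministic_policy_robustness_certificate_general
    {S A : Type*} [MetricSpace S] [Fintype S] [Nonempty S] [MetricSpace A]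
    (γ Rmax Lr LP ε : ℝ) (hγ0 : 0 ≤ γ) (hγ1 : γ < 1)
    (hLr : 0 ≤ Lr) (hLP : 0 ≤ LP)
    (r : S → A → ℝ) (hr0 : ∀ s a, 0 ≤ r s a) (hr1 : ∀ s a, r s a ≤ Rmax)
    (hrLip : ∀ s s' : S, ∀ a a' : A,
      |r s a - r s' a'| ≤ Lr * (dist s s' + dist a a'))
    (P : S → A → S → ℝ) (hP0 : ∀ s a s₁, 0 ≤ P s a s₁)
    (hP1 : ∀ s a, ∑ s₁, P s a s₁ = 1)
    (hPLip : ∀ s s' : S, ∀ a a' : A,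
      ∑ s₁, |P s a s₁ - P s' a' s₁| ≤ LP * (dist s s' + dist a a'))
    (π₁ π₂ : S → A) (hπ : ∀ s, dist (π₁ s) (π₂ s) ≤ ε)
    (V₁ V₂ : S → ℝ)
    (hV₁ : ∀ s, V₁ s = r s (π₁ s) + γ * ∑ s', P s (π₁ s) s' * V₁ s')
    (hV₂ : ∀ s, V₂ s = r s (π₂ s) + γ * ∑ s', P s (π₂ s) s' * V₂ s') :
    ∀ s, V₁ s - V₂ s ≤ (1 / (1 - γ)) * (Lr + γ * Rmax * LP / (1 - γ)) * ε := by
  intro s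
  have hV₂_le : ‖V₂‖ ≤ Rmax / (1 - γ) :=
    IsValueFunction.norm_le hγ0 hγ1 (fun s => (abs_of_nonneg (hr0 s _)).trans_le (hr1 s _))
      (fun s => hP0 s _) (fun s => hP1 s _) hV₂
  have hgap := IsValueFunction.norm_sub_le hγ0 hγ1 (fun s => hP0 s (π₁ s)) (fun s => hP1 s _)
    (fun s => le_mul_of_le_mul_dist_self_add_dist hLr (hπ s) (hrLip s s _ _))
    (fun s => le_mul_of_le_mul_dist_self_add_dist hLP (hπ s) (hPLip s s _ _)) hV₁ hV₂ hV₂_le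
  calc V₁ s - V₂ s ≤ ‖V₁ - V₂‖ := (le_abs_self _).trans (norm_le_pi_norm (V₁ - V₂) s)
    _ ≤ _ := hgap
    _ = _ := by field_simp

/-- Robustness certificate for a deterministic policy: in an `(L_P, L_r)`-Lipschitz
finite discounted decision model, if two deterministic policies choose `ε`-close
actions at every state, then their value functions differ by at most
`(1/(1−γ)) · (L_r + γ R_max L_P / (1−γ)) · ε`. -/
theorem deterministic_policy_robustness_certificate
    {S A : Type*} [MetricSpace S] [Fintype S] [Nonempty S] [MetricSpace A]
    (γ Rmax Lr LP ε : ℝ) (hγ0 : 0 ≤ γ) (hγ1 : γ < 1) (hRmax : 0 ≤ Rmax)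
    (hLr : 0 ≤ Lr) (hLP : 0 ≤ LP) (hε : 0 ≤ ε)
    (r : S → A → ℝ) (hr0 : ∀ s a, 0 ≤ r s a) (hr1 : ∀ s a, r s a ≤ Rmax)
    (hrLip : ∀ s s' : S, ∀ a a' : A,
      |r s a - r s' a'| ≤ Lr * (dist s s' + dist a a'))
    (P : S → A → S → ℝ) (hP0 : ∀ s a s₁, 0 ≤ P s a s₁)
    (hP1 : ∀ s a, ∑ s₁, P s a s₁ = 1)
    (hPLip : ∀ s s' : S, ∀ a a' : A,
      ∑ s₁, |P s a s₁ - P s' a' s₁| ≤ LP * (dist s s' + dist a a'))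
    (π₁ π₂ : S → A) (hπ : ∀ s, dist (π₁ s) (π₂ s) ≤ ε)
    (V₁ V₂ : S → ℝ)
    (hV₁ : ∀ s, V₁ s = r s (π₁ s) + γ * ∑ s', P s (π₁ s) s' * V₁ s')
    (hV₂ : ∀ s, V₂ s = r s (π₂ s) + γ * ∑ s', P s (π₂ s) s' * V₂ s') :
    ∀ s, V₁ s - V₂ s ≤ (1 / (1 - γ)) * (Lr + γ * Rmax * LP / (1 - γ)) * ε :=
  deterministic_policy_robustness_certificate_general γ Rmax Lr LP ε hγ0 hγ1 hLr hLP r hr0 hr1 hrLip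
    P hP0 hP1 hPLip π₁ π₂ hπ V₁ V₂ hV₁ hV₂
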